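/- arXiv:2404.00310 — 2 statements merged into one kernel-verified Lean document; each statement's English description precedes it below -/
import Mathlib

section
/- Let τ be a nonempty index set, φ : τ → τ an injective self-map, and w : τ → ℂ a weight vector such that σ_{φ,w} maps ℓ²(τ) into ℓ²(τ). Then there exist a self-map η : τ → τ and a weight vector u : τ → ℂ with each u_α ∈ {conj(w_β) : β ∈ τ} ∪ {0}, such that σ_{η,u} maps ℓ²(τ) into ℓ²(τ) and (σ_{φ,w}|_{ℓ²(τ)})* = σ_{η,u}|_{ℓ²(τ)}; i.e., the adjoint of a weighted generalized shift operator with injective φ is itself a weighted generalized shift operator. -/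
/-!
Testing the adjoint against the unit vector `e_θ` gives `(T* y) θ = ⟪T e_θ, y⟫`.
Since `(T e_θ) α = w α` when `φ α = θ` and `0` otherwise, injectivity of `φ` makes `T e_θ`
the unit vector at the unique preimage `β` of `θ` scaled by `w β`, or zero when `θ ∉ range φ`.
Hence `T*` is the weighted shift along a left inverse of `φ` with weights `conj (w β)` or `0`.
-/

open ContinuousLinearMap

namespace lp

variable {𝕜 τ : Type*} [RCLike 𝕜]

theorem adjoint_apply_eq_inner_single [DecidableEq τ]
    (T : lp (fun _ : τ => 𝕜) 2 →L[𝕜] lp (fun _ : τ => 𝕜) 2) (y : lp (fun _ : τ => 𝕜) 2)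
    (θ : τ) : adjoint T y θ = inner 𝕜 (T (lp.single 2 θ 1)) y := by
  rw [← adjoint_inner_right, lp.inner_single_left, RCLike.inner_apply', map_one, one_mul]

section WeightedShift

variable {φ : τ → τ} {w : τ → 𝕜} {T : lp (fun _ : τ => 𝕜) 2 →L[𝕜] lp (fun _ : τ => 𝕜) 2}
  [DecidableEq τ]

theorem weightedShift_apply_single_image (hφ : Function.Injective φ)
    (hT : ∀ (x : lp (fun _ : τ => 𝕜) 2) (α : τ), T x α = w α * x (φ α)) (β : τ) :
    T (lp.single 2 (φ β) 1) = lp.single 2 β (w β) := by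
  ext α
  rw [hT, lp.single_apply, lp.single_apply]
  by_cases hα : α = β
  · subst hα
    simp
  · simp [hα, hφ.ne hα]

theorem weightedShift_apply_single_of_notMem_range
    (hT : ∀ (x : lp (fun _ : τ => 𝕜) 2) (α : τ), T x α = w α * x (φ α)) {θ : τ}
    (hθ : θ ∉ Set.range φ) : T (lp.single 2 θ 1) = 0 := by
  ext α
  have hα : φ α ≠ θ := fun h => hθ ⟨α, h⟩
  simp [hT, hα]

end WeightedShift

end lp

/-- If `φ` is injective, the adjoint of a bounded weighted generalized shift
operator `σ_{φ,w}|_{ℓ²(τ)}` is itself a weighted generalized shift operator, with weights in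
`{conj(w_β) : β ∈ τ} ∪ {0}`. -/
theorem weighted_shift_adjoint_of_injective {τ : Type*} [Nonempty τ] (φ : τ → τ) (w : τ → ℂ)
    (hφ : Function.Injective φ)
    (T : lp (fun _ : τ => ℂ) 2 →L[ℂ] lp (fun _ : τ => ℂ) 2)
    (hT : ∀ (x : lp (fun _ : τ => ℂ) 2) (α : τ), T x α = w α * x (φ α)) :
    ∃ (η : τ → τ) (u : τ → ℂ),
      (∀ α, u α ∈ Set.range (fun β => (starRingEnd ℂ) (w β)) ∪ {0}) ∧
      (∀ (x : τ → ℂ), Memℓp x 2 → Memℓp (fun α => u α * x (η α)) 2) ∧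
      (∀ (y : lp (fun _ : τ => ℂ) 2) (θ : τ),
        ContinuousLinearMap.adjoint T y θ = u θ * y (η θ)) := by
  classical
  set η := Function.invFun φ
  set u : τ → ℂ := fun θ => if θ ∈ Set.range φ then (starRingEnd ℂ) (w (η θ)) else 0
  have adjoint_eq : ∀ (y : lp (fun _ : τ => ℂ) 2) (θ : τ), adjoint T y θ = u θ * y (η θ) := by
    intro y θ
    rw [lp.adjoint_apply_eq_inner_single]
    by_cases hθ : θ ∈ Set.range φ
    · obtain ⟨β, rfl⟩ := hθ
      have hηβ : η (φ β) = β := Function.leftInverse_invFun hφ β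
      rw [lp.weightedShift_apply_single_image hφ hT, lp.inner_single_left, RCLike.inner_apply']
      simp only [u, Set.mem_range_self, if_true, hηβ]
    · rw [lp.weightedShift_apply_single_of_notMem_range hT hθ, inner_zero_left]
      simp only [u, if_neg hθ, zero_mul]
  refine ⟨η, u, fun θ => ?_, fun x hx => ?_, adjoint_eq⟩
  · by_cases hθ : θ ∈ Set.range φ
    · exact Or.inl ⟨η θ, (if_pos hθ).symm⟩
    · exact Or.inr (if_neg hθ)
  · have hmem := lp.memℓp (adjoint T ⟨x, hx⟩)
    rwa [show ⇑(adjoint T ⟨x, hx⟩) = _ from funext (adjoint_eq ⟨x, hx⟩)] at hmem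
end

section
/- Let τ be a nonempty index set, φ : τ → τ a self-map, and w : τ → ℂ a weight vector such that σ_{φ,w} maps ℓ²(τ) into ℓ²(τ). Then the bounded operator σ_{φ,w}|_{ℓ²(τ)} : ℓ²(τ) → ℓ²(τ) is bijective if and only if φ : τ → τ is bijective, w_α ≠ 0 for all α ∈ τ, and sup { |w_α| + 1/|w_α| : α ∈ τ } < +∞. -/
/-!
The point evaluations of `σ_{φ,w}` on the unit vectors `δ_α` carry all the information: a preimage
of `δ_α` forces `w_α ≠ 0` and `φ` injective, `δ_β` with `β ∉ range φ` lies in the kernel, and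
`|w_α| ≤ ‖T‖`, `1 / |w_α| ≤ ‖T⁻¹‖` are read off `T δ_{φ α}` and `T⁻¹ δ_α`, where `T⁻¹` is bounded
by the open mapping theorem. Conversely, when `φ` is bijective and `1 / w` is bounded,
`x = (y / w) ∘ φ⁻¹` is a preimage of `y`, and it is square-summable because `y / w` is.
-/

open Function

theorem Memℓp.comp_equiv {α β E : Type*} [NormedAddCommGroup E] {p : ENNReal} {f : α → E}
    (hf : Memℓp f p) (e : β ≃ α) : Memℓp (f ∘ e) p := by
  obtain rfl | rfl | hp := p.trichotomy
  · rw [memℓp_zero_iff] at hf ⊢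
    exact hf.preimage e.injective.injOn
  · rw [memℓp_infty_iff] at hf ⊢
    exact hf.range_comp_right e
  · rw [memℓp_gen_iff hp] at hf ⊢
    exact e.summable_iff.2 hf

namespace WeightedShift

variable {τ : Type*} {φ : τ → τ} {w : τ → ℂ}
  {T : lp (fun _ : τ => ℂ) 2 →L[ℂ] lp (fun _ : τ => ℂ) 2}

open scoped Classical in
theorem norm_single_one (α : τ) : ‖lp.single (E := fun _ : τ => ℂ) 2 α 1‖ = 1 := by
  rw [lp.norm_single (by norm_num), norm_one]

open scoped Classical in
theorem weight_ne_zero_of_surjective (hT : ∀ x α, T x α = w α * x (φ α))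
    (hsurj : Surjective T) (α : τ) : w α ≠ 0 := by
  obtain ⟨x, hx⟩ := hsurj (lp.single 2 α 1)
  have h := congrArg (· α) hx
  simp only [hT, lp.single_apply_self] at h
  exact left_ne_zero_of_mul_eq_one h

open scoped Classical in
theorem injective_shift_of_surjective (hT : ∀ x α, T x α = w α * x (φ α))
    (hsurj : Surjective T) : Injective φ := by
  intro a b hab
  by_contra hne
  obtain ⟨x, hx⟩ := hsurj (lp.single 2 a 1)
  have ha := congrArg (· a) hx
  have hb := congrArg (· b) hx
  simp only [hT, lp.single_apply_self] at ha
  simp only [hT, lp.single_apply_ne 2 a _ (Ne.symm hne), ← hab] at hb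
  exact right_ne_zero_of_mul_eq_one ha
    ((mul_eq_zero.1 hb).resolve_left (weight_ne_zero_of_surjective hT hsurj b))

open scoped Classical in
theorem surjective_shift_of_injective (hT : ∀ x α, T x α = w α * x (φ α))
    (hinj : Injective T) : Surjective φ := by
  intro β
  by_contra! hβ
  have hker : T (lp.single 2 β 1) = 0 := by
    ext α
    rw [hT, lp.single_apply_ne 2 β _ (hβ α), mul_zero, lp.coeFn_zero, Pi.zero_apply]
  have h := congrArg (· β) ((map_eq_zero_iff T hinj).1 hker)
  rw [lp.single_apply_self, lp.coeFn_zero, Pi.zero_apply] at h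
  exact one_ne_zero h

open scoped Classical in
theorem norm_weight_le_opNorm (hT : ∀ x α, T x α = w α * x (φ α)) (α : τ) : ‖w α‖ ≤ ‖T‖ :=
  calc ‖w α‖ = ‖T (lp.single 2 (φ α) 1) α‖ := by rw [hT, lp.single_apply_self, mul_one]
    _ ≤ ‖T (lp.single 2 (φ α) 1)‖ := lp.norm_apply_le_norm two_ne_zero _ α
    _ ≤ ‖T‖ := T.le_of_opNorm_le le_rfl _ |>.trans_eq (by rw [norm_single_one, mul_one])

open scoped Classical in
theorem inv_norm_weight_le_opNorm_of_rightInverse (hT : ∀ x α, T x α = w α * x (φ α))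
    {S : lp (fun _ : τ => ℂ) 2 →L[ℂ] lp (fun _ : τ => ℂ) 2} (hS : RightInverse S T) (α : τ) :
    ‖w α‖⁻¹ ≤ ‖S‖ := by
  set x := S (lp.single 2 α 1)
  have hx : w α * x (φ α) = 1 := by rw [← hT, hS, lp.single_apply_self]
  calc ‖w α‖⁻¹ = ‖x (φ α)‖ := by
        rw [← norm_inv, inv_eq_of_mul_eq_one_right hx]
    _ ≤ ‖x‖ := lp.norm_apply_le_norm two_ne_zero _ _
    _ ≤ ‖S‖ := S.le_of_opNorm_le le_rfl _ |>.trans_eq (by rw [norm_single_one, mul_one])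

theorem injective_of_surjective_shift (hT : ∀ x α, T x α = w α * x (φ α))
    (hφ : Surjective φ) (hw : ∀ α, w α ≠ 0) : Injective T := by
  refine (injective_iff_map_eq_zero T).2 fun x hx => ?_
  ext β
  obtain ⟨α, rfl⟩ := hφ β
  have h := congrArg (· α) hx
  simp only [hT, lp.coeFn_zero, Pi.zero_apply] at h ⊢
  exact (mul_eq_zero.1 h).resolve_left (hw α)

theorem surjective_of_bijective_shift (hT : ∀ x α, T x α = w α * x (φ α))
    (hφ : Bijective φ) (hw : ∀ α, w α ≠ 0) (hw_inv : BddAbove (Set.range fun α => ‖w α‖⁻¹)) :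
    Surjective T := by
  intro y
  let e := Equiv.ofBijective φ hφ
  have hmem : Memℓp (fun α => (w α)⁻¹ * y α) 2 :=
    Memℓp.bilin_of_top_left (fun _ => ContinuousLinearMap.mul ℂ ℂ)
      (fun _ => ContinuousLinearMap.opNorm_mul_le ℂ ℂ) (e := fun α => (w α)⁻¹)
      (memℓp_infty_iff.2 (by simpa only [norm_inv] using hw_inv)) y.2
  refine ⟨⟨_, hmem.comp_equiv e.symm⟩, ?_⟩
  ext α
  rw [hT]
  change w α * ((w (e.symm (e α)))⁻¹ * y (e.symm (e α))) = y α
  rw [e.symm_apply_apply, mul_inv_cancel_left₀ (hw α)]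

end WeightedShift

open WeightedShift

theorem weighted_shift_bijective_iff_general {τ : Type*} (φ : τ → τ) (w : τ → ℂ)
    (T : lp (fun _ : τ => ℂ) 2 →L[ℂ] lp (fun _ : τ => ℂ) 2)
    (hT : ∀ (x : lp (fun _ : τ => ℂ) 2) (α : τ), T x α = w α * x (φ α)) :
    Function.Bijective T ↔
      Function.Bijective φ ∧ (∀ α, w α ≠ 0) ∧
        BddAbove (Set.range fun α => ‖w α‖ + 1 / ‖w α‖) := by
  constructor
  · intro hbij
    let S := (ContinuousLinearEquiv.ofBijective T (LinearMap.ker_eq_bot.2 hbij.1)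
      (LinearMap.range_eq_top.2 hbij.2)).symm.toContinuousLinearMap
    have hS : RightInverse S T := ContinuousLinearEquiv.ofBijective_apply_symm_apply T _ _
    refine ⟨⟨injective_shift_of_surjective hT hbij.2, surjective_shift_of_injective hT hbij.1⟩,
      weight_ne_zero_of_surjective hT hbij.2, ‖T‖ + ‖S‖, ?_⟩
    rintro _ ⟨α, rfl⟩
    show ‖w α‖ + 1 / ‖w α‖ ≤ _
    rw [one_div]
    exact add_le_add (norm_weight_le_opNorm hT α)
      (inv_norm_weight_le_opNorm_of_rightInverse hT hS α)
  · rintro ⟨hφ, hw, hbdd⟩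
    have hw_inv : BddAbove (Set.range fun α => ‖w α‖⁻¹) :=
      hbdd.range_mono _ fun α => by rw [← one_div]; exact le_add_of_nonneg_left (norm_nonneg _)
    exact ⟨injective_of_surjective_shift hT hφ.2 hw, surjective_of_bijective_shift hT hφ hw hw_inv⟩

/-- The bounded weighted generalized shift operator `σ_{φ,w}|_{ℓ²(τ)}` is
bijective if and only if `φ` is bijective, `w_α ≠ 0` for all `α`, and
`sup { |w_α| + 1/|w_α| : α ∈ τ } < +∞`. -/
theorem weighted_shift_bijective_iff {τ : Type*} [Nonempty τ] (φ : τ → τ) (w : τ → ℂ)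
    (T : lp (fun _ : τ => ℂ) 2 →L[ℂ] lp (fun _ : τ => ℂ) 2)
    (hT : ∀ (x : lp (fun _ : τ => ℂ) 2) (α : τ), T x α = w α * x (φ α)) :
    Function.Bijective T ↔
      Function.Bijective φ ∧ (∀ α, w α ≠ 0) ∧
        BddAbove (Set.range fun α => ‖w α‖ + 1 / ‖w α‖) :=
  weighted_shift_bijective_iff_general φ w T hT
end
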